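/- arXiv:1911.02858 — 3 statements merged into one kernel-verified Lean document; each statement's English description precedes it below -/
import Mathlib

section
/- An antilattice (S; ∨, ∧) in which (S; ∨) is a left-zero band (x ∨ y = x) is regular: the four Green's relations L∨, R∨, L∧, R∧ are all congruences of (S; ∨, ∧). -/
def IsAntilattice {S : Type*} (join meet : S → S → S) : Prop :=
  (∀ a b c : S, join (join a b) c = join a (join b c)) ∧
  (∀ a : S, join a a = a) ∧ (∀ a b : S, join (join a b) a = a) ∧
  (∀ a b c : S, meet (meet a b) c = meet a (meet b c)) ∧
  (∀ a : S, meet a a = a) ∧ (∀ a b : S, meet (meet a b) a = a)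

/-- A congruence of the double algebra `(S; ∨, ∧)`: an equivalence relation
compatible with both operations. -/
def IsCongruence {S : Type*} (join meet : S → S → S) (θ : S → S → Prop) : Prop :=
  Equivalence θ ∧
  ∀ a b c d : S, θ a b → θ c d → θ (join a c) (join b d) ∧ θ (meet a c) (meet b d)

/-- Green's relations of the two reducts. -/
def GreenLjoin {S : Type*} (join : S → S → S) (a b : S) : Prop := join a b = a ∧ join b a = b
def GreenRjoin {S : Type*} (join : S → S → S) (a b : S) : Prop := join a b = b ∧ join b a = a
def GreenLmeet {S : Type*} (meet : S → S → S) (a b : S) : Prop := meet a b = a ∧ meet b a = b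
def GreenRmeet {S : Type*} (meet : S → S → S) (a b : S) : Prop := meet a b = b ∧ meet b a = a

/-- A regular antilattice: all four Green's relations are congruences. -/
def IsRegularAntilattice {S : Type*} (join meet : S → S → S) : Prop :=
  IsAntilattice join meet ∧
  IsCongruence join meet (GreenLjoin join) ∧ IsCongruence join meet (GreenRjoin join) ∧
  IsCongruence join meet (GreenLmeet meet) ∧ IsCongruence join meet (GreenRmeet meet)

/-!
In a rectangular band `x (y z) = x z`; this makes both Green relations of `∧` compatible with `∧`.
A left-zero `∨` is compatible with every relation, `L∨` is the full relation and `R∨` is equality,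
so both are compatible with `∧` as well.
-/

section Band

variable {S : Type*} {op : S → S → S}

theorem rectangular_op_op_eq (assoc : ∀ a b c : S, op (op a b) c = op a (op b c))
    (rect : ∀ a b : S, op (op a b) a = a) (a b c : S) : op a (op b c) = op a c :=
  calc op a (op b c) = op (op (op a c) a) (op b c) := by rw [rect]
    _ = op a (op (op (op c a) b) c) := by simp only [assoc]
    _ = op a c := by rw [assoc c a b, rect]

theorem greenLmeet_equivalence (assoc : ∀ a b c : S, op (op a b) c = op a (op b c))
    (idem : ∀ a : S, op a a = a) : Equivalence (GreenLmeet op) where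
  refl a := ⟨idem a, idem a⟩
  symm h := ⟨h.2, h.1⟩
  trans := by
    rintro a b c ⟨hab, hba⟩ ⟨hbc, hcb⟩
    exact ⟨by rw [← hab, assoc, hbc], by rw [← hcb, assoc, hba]⟩

theorem greenRmeet_equivalence (assoc : ∀ a b c : S, op (op a b) c = op a (op b c))
    (idem : ∀ a : S, op a a = a) : Equivalence (GreenRmeet op) where
  refl a := ⟨idem a, idem a⟩
  symm h := ⟨h.2, h.1⟩
  trans := by
    rintro a b c ⟨hab, hba⟩ ⟨hbc, hcb⟩
    exact ⟨by rw [← hbc, ← assoc, hab], by rw [← hba, ← assoc, hcb]⟩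

theorem greenLmeet_op (assoc : ∀ a b c : S, op (op a b) c = op a (op b c))
    (rect : ∀ a b : S, op (op a b) a = a) (a b : S) {c d : S} (hcd : GreenLmeet op c d) :
    GreenLmeet op (op a c) (op b d) :=
  ⟨by rw [assoc, rectangular_op_op_eq assoc rect c b d, hcd.1],
    by rw [assoc, rectangular_op_op_eq assoc rect d a c, hcd.2]⟩

theorem greenRmeet_op (assoc : ∀ a b c : S, op (op a b) c = op a (op b c))
    (rect : ∀ a b : S, op (op a b) a = a) {a b : S} (hab : GreenRmeet op a b) (c d : S) :
    GreenRmeet op (op a c) (op b d) :=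
  ⟨by rw [assoc, rectangular_op_op_eq assoc rect, ← assoc, hab.1],
    by rw [assoc, rectangular_op_op_eq assoc rect, ← assoc, hab.2]⟩

end Band

section LeftZero

variable {S : Type*} {join : S → S → S}

theorem greenLjoin_of_leftZero (hjoin : ∀ x y : S, join x y = x) (a b : S) :
    GreenLjoin join a b :=
  ⟨hjoin a b, hjoin b a⟩

theorem eq_of_greenRjoin_of_leftZero (hjoin : ∀ x y : S, join x y = x) {a b : S}
    (h : GreenRjoin join a b) : a = b :=
  (hjoin a b).symm.trans h.1

theorem greenRjoin_op_of_leftZero (hjoin : ∀ x y : S, join x y = x) (f : S → S → S)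
    {a b c d : S} (hab : GreenRjoin join a b) (hcd : GreenRjoin join c d) :
    GreenRjoin join (f a c) (f b d) := by
  obtain rfl := eq_of_greenRjoin_of_leftZero hjoin hab
  obtain rfl := eq_of_greenRjoin_of_leftZero hjoin hcd
  exact ⟨hjoin _ _, hjoin _ _⟩

theorem isCongruence_of_leftZero (hjoin : ∀ x y : S, join x y = x) {meet : S → S → S}
    {θ : S → S → Prop} (hθ : Equivalence θ)
    (hmeet : ∀ a b c d : S, θ a b → θ c d → θ (meet a c) (meet b d)) :
    IsCongruence join meet θ :=
  ⟨hθ, fun a b c d hab hcd => ⟨by rwa [hjoin, hjoin], hmeet a b c d hab hcd⟩⟩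

end LeftZero

/-- An antilattice whose join reduct is a left-zero band is regular. -/
theorem leftZero_join_antilattice_regular {S : Type*} (join meet : S → S → S)
    (hanti : IsAntilattice join meet)
    (hflat : ∀ x y : S, join x y = x) :
    IsCongruence join meet (GreenLjoin join) ∧
    IsCongruence join meet (GreenRjoin join) ∧
    IsCongruence join meet (GreenLmeet meet) ∧
    IsCongruence join meet (GreenRmeet meet) := by
  obtain ⟨jassoc, jidem, -, massoc, midem, mrect⟩ := hanti
  -- `GreenLjoin`/`GreenRjoin` unfold to `GreenLmeet`/`GreenRmeet`, so the band lemmas apply to `∨`.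
  exact ⟨isCongruence_of_leftZero hflat (greenLmeet_equivalence jassoc jidem)
      fun _ _ _ _ _ _ => greenLjoin_of_leftZero hflat _ _,
    isCongruence_of_leftZero hflat (greenRmeet_equivalence jassoc jidem)
      fun _ _ _ _ => greenRjoin_op_of_leftZero hflat meet,
    isCongruence_of_leftZero hflat (greenLmeet_equivalence massoc midem)
      fun a b _ _ _ hcd => greenLmeet_op massoc mrect a b hcd,
    isCongruence_of_leftZero hflat (greenRmeet_equivalence massoc midem)
      fun _ _ c d hab _ => greenRmeet_op massoc mrect hab c d⟩
end

section
/- Let S be a nonempty regular antilattice whose flat decomposition has factors of sizes a, b, c, d (so S ≅ a_LL × b_LR × c_RL × d_RR). Then the number of subalgebras of S (including the empty subalgebra) is 1 + (2^a − 1)(2^b − 1)(2^c − 1)(2^d − 1). -/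
/-!
Through `e`, subalgebras of `S` correspond to subalgebras of the flat product
`Fin a × Fin b × Fin c × Fin d`. There every nonempty subalgebra `U` is the box of its four
coordinate projections: given `p, q, r, s ∈ U`, the element `(p₁, q₂, r₃, s₄)` equals
`(p ∨ r) ∧ (q ∨ s)` and so lies in `U`. Conversely every box with nonempty sides is a
subalgebra and determines its sides, so the nonempty subalgebras are counted by four
independent choices of nonempty subsets.
-/

section Subalgebra

variable {S P : Type*}

def IsSubalgebra (join meet : S → S → S) (T : Set S) : Prop :=
  ∀ x ∈ T, ∀ y ∈ T, join x y ∈ T ∧ meet x y ∈ T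

variable {join meet : S → S → S} {join' meet' : P → P → P}

theorem IsSubalgebra.preimage {f : S → P} (hj : ∀ x y, f (join x y) = join' (f x) (f y))
    (hm : ∀ x y, f (meet x y) = meet' (f x) (f y)) {U : Set P}
    (hU : IsSubalgebra join' meet' U) : IsSubalgebra join meet (f ⁻¹' U) :=
  fun x hx y hy => by simpa only [Set.mem_preimage, hj, hm] using hU _ hx _ hy

def Equiv.subalgebraCongr (e : S ≃ P) (hj : ∀ x y, e (join x y) = join' (e x) (e y))
    (hm : ∀ x y, e (meet x y) = meet' (e x) (e y)) :
    {T : Set S // IsSubalgebra join meet T} ≃ {U : Set P // IsSubalgebra join' meet' U} :=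
  Equiv.subtypeEquiv (Equiv.Set.congr e) fun T => by
    have hj' : ∀ u v, e.symm (join' u v) = join (e.symm u) (e.symm v) := fun u v =>
      e.injective (by rw [hj]; simp)
    have hm' : ∀ u v, e.symm (meet' u v) = meet (e.symm u) (e.symm v) := fun u v =>
      e.injective (by rw [hm]; simp)
    rw [Equiv.Set.congr_apply, e.image_eq_preimage_symm]
    refine ⟨IsSubalgebra.preimage hj' hm', fun h => ?_⟩
    simpa only [e.preimage_symm_preimage] using h.preimage hj hm

end Subalgebra

theorem Set.natCard_nonempty {α : Type*} [Finite α] :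
    Nat.card {s : Set α // s.Nonempty} = 2 ^ Nat.card α - 1 := by
  classical
  have := Fintype.ofFinite α
  simp only [Set.nonempty_iff_ne_empty, Nat.card_eq_fintype_card, Fintype.card_subtype_compl,
    Fintype.card_subtype_eq, Fintype.card_set]

section Flat

variable {α β γ δ : Type*}

def flatJoin (x y : α × β × γ × δ) : α × β × γ × δ := (x.1, x.2.1, y.2.2.1, y.2.2.2)

def flatMeet (x y : α × β × γ × δ) : α × β × γ × δ := (x.1, y.2.1, x.2.2.1, y.2.2.2)

theorem isSubalgebra_flat_prod (A : Set α) (B : Set β) (C : Set γ) (D : Set δ) :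
    IsSubalgebra flatJoin flatMeet (A ×ˢ B ×ˢ C ×ˢ D) := fun _ hx _ hy =>
  ⟨⟨hx.1, hx.2.1, hy.2.2.1, hy.2.2.2⟩, ⟨hx.1, hy.2.1, hx.2.2.1, hy.2.2.2⟩⟩

theorem IsSubalgebra.eq_flat_prod_image {U : Set (α × β × γ × δ)}
    (hU : IsSubalgebra flatJoin flatMeet U) :
    U = (Prod.fst '' U) ×ˢ ((·.2.1) '' U) ×ˢ ((·.2.2.1) '' U) ×ˢ ((·.2.2.2) '' U) := by
  refine subset_antisymm (fun x hx => ⟨⟨x, hx, rfl⟩, ⟨x, hx, rfl⟩, ⟨x, hx, rfl⟩, ⟨x, hx, rfl⟩⟩) ?_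
  rintro x ⟨⟨p, hp, hpx⟩, ⟨q, hq, hqx⟩, ⟨r, hr, hrx⟩, ⟨s, hs, hsx⟩⟩
  have hx : x = flatMeet (flatJoin p r) (flatJoin q s) := by
    simp only [flatMeet, flatJoin, hpx, hqx, hrx, hsx]
  exact hx ▸ (hU _ (hU p hp r hr).1 _ (hU q hq s hs).1).2

variable (α β γ δ) in
def flatSubalgebraOf :
    Option ({A : Set α // A.Nonempty} × {B : Set β // B.Nonempty} ×
      {C : Set γ // C.Nonempty} × {D : Set δ // D.Nonempty}) →
    {U : Set (α × β × γ × δ) // IsSubalgebra flatJoin flatMeet U}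
  | none => ⟨∅, fun _ hx => hx.elim⟩
  | some (A, B, C, D) => ⟨A.1 ×ˢ B.1 ×ˢ C.1 ×ˢ D.1, isSubalgebra_flat_prod A.1 B.1 C.1 D.1⟩

theorem flatSubalgebraOf_bijective : Function.Bijective (flatSubalgebraOf α β γ δ) := by
  constructor
  · rintro (_ | ⟨A, B, C, D⟩) (_ | ⟨A', B', C', D'⟩) h <;>
      replace h := congrArg Subtype.val h
    · rfl
    · exact absurd h.symm (A'.2.prod (B'.2.prod (C'.2.prod D'.2))).ne_empty
    · exact absurd h (A.2.prod (B.2.prod (C.2.prod D.2))).ne_empty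
    · obtain ⟨hA, h⟩ := (Set.prod_eq_prod_iff_of_nonempty
        (A.2.prod (B.2.prod (C.2.prod D.2)))).1 h
      obtain ⟨hB, h⟩ := (Set.prod_eq_prod_iff_of_nonempty (B.2.prod (C.2.prod D.2))).1 h
      obtain ⟨hC, hD⟩ := (Set.prod_eq_prod_iff_of_nonempty (C.2.prod D.2)).1 h
      simp only [Subtype.ext hA, Subtype.ext hB, Subtype.ext hC, Subtype.ext hD]
  · rintro ⟨U, hU⟩
    rcases U.eq_empty_or_nonempty with rfl | hne
    · exact ⟨none, rfl⟩
    · exact ⟨some (⟨_, hne.image _⟩, ⟨_, hne.image _⟩, ⟨_, hne.image _⟩, ⟨_, hne.image _⟩),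
        Subtype.ext hU.eq_flat_prod_image.symm⟩

theorem natCard_flat_subalgebras [Finite α] [Finite β] [Finite γ] [Finite δ] :
    Nat.card {U : Set (α × β × γ × δ) // IsSubalgebra flatJoin flatMeet U} =
      1 + (2 ^ Nat.card α - 1) * (2 ^ Nat.card β - 1) * (2 ^ Nat.card γ - 1) *
        (2 ^ Nat.card δ - 1) := by
  rw [← Nat.card_congr (Equiv.ofBijective _ flatSubalgebraOf_bijective), Finite.card_option,
    Nat.card_prod, Nat.card_prod, Nat.card_prod, Set.natCard_nonempty, Set.natCard_nonempty,
    Set.natCard_nonempty, Set.natCard_nonempty]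
  ring

end Flat

theorem regular_antilattice_subalgebra_count_general {S : Type*}
    (join meet : S → S → S) (a b c d : ℕ)
    (e : S ≃ Fin a × Fin b × Fin c × Fin d)
    -- the isomorphism carries `join`/`meet` to the flat product operations:
    -- LL on the first factor, LR on the second, RL on the third, RR on the fourth
    (hj : ∀ x y : S, e (join x y) =
      ((e x).1, (e x).2.1, (e y).2.2.1, (e y).2.2.2))
    (hm : ∀ x y : S, e (meet x y) =
      ((e x).1, (e y).2.1, (e x).2.2.1, (e y).2.2.2)) :
    Nat.card {T : Set S // ∀ x ∈ T, ∀ y ∈ T, join x y ∈ T ∧ meet x y ∈ T} =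
      1 + (2 ^ a - 1) * (2 ^ b - 1) * (2 ^ c - 1) * (2 ^ d - 1) := by
  calc Nat.card {T : Set S // IsSubalgebra join meet T}
      = Nat.card {U : Set (Fin a × Fin b × Fin c × Fin d) // IsSubalgebra flatJoin flatMeet U} :=
        Nat.card_congr (e.subalgebraCongr hj hm)
    _ = 1 + (2 ^ a - 1) * (2 ^ b - 1) * (2 ^ c - 1) * (2 ^ d - 1) := by
        simp only [natCard_flat_subalgebras, Nat.card_eq_fintype_card, Fintype.card_fin]

/-- If a nonempty regular antilattice `S` has flat decomposition with factors of
sizes `a, b, c, d` (i.e. `S ≅ a_LL × b_LR × c_RL × d_RR`), then the number of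
subalgebras of `S` (including the empty one) is
`1 + (2^a - 1)(2^b - 1)(2^c - 1)(2^d - 1)`. -/
theorem regular_antilattice_subalgebra_count {S : Type*} [Nonempty S]
    (join meet : S → S → S) (hreg : IsRegularAntilattice join meet)
    (a b c d : ℕ) (ha : 0 < a) (hb : 0 < b) (hc : 0 < c) (hd : 0 < d)
    (e : S ≃ Fin a × Fin b × Fin c × Fin d)
    -- the isomorphism carries `join`/`meet` to the flat product operations:
    -- LL on the first factor, LR on the second, RL on the third, RR on the fourth
    (hj : ∀ x y : S, e (join x y) =
      ((e x).1, (e x).2.1, (e y).2.2.1, (e y).2.2.2))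
    (hm : ∀ x y : S, e (meet x y) =
      ((e x).1, (e y).2.1, (e x).2.2.1, (e y).2.2.2)) :
    Nat.card {T : Set S // ∀ x ∈ T, ∀ y ∈ T, join x y ∈ T ∧ meet x y ∈ T} =
      1 + (2 ^ a - 1) * (2 ^ b - 1) * (2 ^ c - 1) * (2 ^ d - 1) :=
  regular_antilattice_subalgebra_count_general join meet a b c d e hj hm
end

section
/- For a prime p and e ≥ 0, the number of ordered quadruples (a, b, c, d) of positive integers with abcd = p^e equals the binomial coefficient C(e+3, 3). Consequently, the number of isomorphism classes of regular antilattices of order p^e is C(e+3, 3). -/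
/-- Two antilattice structures on the same carrier are isomorphic if some
bijection carries one pair of operations to the other. -/
def AntilatticeIso {F : Type*}
    (p q : (F → F → F) × (F → F → F)) : Prop :=
  ∃ e : F ≃ F, (∀ x y : F, e (p.1 x y) = q.1 (e x) (e y)) ∧
    (∀ x y : F, e (p.2 x y) = q.2 (e x) (e y))

/-!
Fix a base point `o` of a regular antilattice `(S, ∨, ∧)`. The corner map `x ↦ (x ∨ o) ∧ o` is a
retraction that only sees the left argument of `∨` and of `∧`; flipping `∨` and/or `∧` (which
preserves regularity) gives three more, `x ↦ o ∧ (x ∨ o)`, `x ↦ (o ∨ x) ∧ o`, `x ↦ o ∧ (o ∨ x)`.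
Sending `x` to its four corners is an isomorphism onto the rectangular antilattice on the product
`A × B × C × D` of their images, where `(a, b, c, d) ∨ (a', b', c', d') = (a, b, c', d')` and
`(a, b, c, d) ∧ (a', b', c', d') = (a, b', c, d')`. The sizes of the four images do not depend on
`o`, are isomorphism invariants, and equal `|A|, |B|, |C|, |D|` on a rectangular antilattice. Hence
isomorphism classes on an `n`-element set correspond to ordered factorizations `n = abcd`; for
`n = p ^ e` these are `(p ^ i, p ^ j, p ^ k, p ^ l)` with `i + j + k + l = e`, counted by stars and
bars.
-/

open Function

abbrev OrderedFactorizations (n : ℕ) : Type :=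
  {q : ℕ × ℕ × ℕ × ℕ // 0 < q.1 ∧ 0 < q.2.1 ∧ 0 < q.2.2.1 ∧ 0 < q.2.2.2 ∧
    q.1 * q.2.1 * q.2.2.1 * q.2.2.2 = n}

def quadrupleEquivFun {α : Type*} : α × α × α × α ≃ (Fin 4 → α) where
  toFun q := ![q.1, q.2.1, q.2.2.1, q.2.2.2]
  invFun f := (f 0, f 1, f 2, f 3)
  right_inv f := by ext i; fin_cases i <;> rfl

theorem card_quadruples_sum_eq (e : ℕ) :
    Nat.card {q : ℕ × ℕ × ℕ × ℕ // q.1 + q.2.1 + q.2.2.1 + q.2.2.2 = e} = (e + 3).choose 3 := by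
  have hsum : {q : ℕ × ℕ × ℕ × ℕ // q.1 + q.2.1 + q.2.2.1 + q.2.2.2 = e} ≃
      {P : Fin 4 → ℕ // ∑ i, P i = e} :=
    quadrupleEquivFun.subtypeEquiv fun q => by rw [Fin.sum_univ_four]; rfl
  rw [Nat.card_congr (hsum.trans (Sym.equivNatSumOfFintype (Fin 4) e).symm),
    Nat.card_eq_fintype_card, Sym.card_sym_eq_choose, Fintype.card_fin,
    show 4 + e - 1 = e + 3 by omega, Nat.choose_symm_add]

theorem card_orderedFactorizations_prime_pow {p : ℕ} (hp : p.Prime) (e : ℕ) :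
    Nat.card (OrderedFactorizations (p ^ e)) = (e + 3).choose 3 := by
  have hinj := Nat.pow_right_injective hp.two_le
  rw [← card_quadruples_sum_eq e]
  refine (Nat.card_eq_of_bijective
    (fun q => ⟨(p ^ q.1.1, p ^ q.1.2.1, p ^ q.1.2.2.1, p ^ q.1.2.2.2), pow_pos hp.pos _,
      pow_pos hp.pos _, pow_pos hp.pos _, pow_pos hp.pos _, by simp only [← pow_add, q.2]⟩)
    ⟨fun q q' hqq => ?_, ?_⟩).symm
  · replace hqq := congrArg Subtype.val hqq
    simp only [Prod.mk.injEq, hinj.eq_iff] at hqq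
    exact Subtype.ext (Prod.ext hqq.1 (Prod.ext hqq.2.1 (Prod.ext hqq.2.2.1 hqq.2.2.2)))
  · rintro ⟨⟨a, b, c, d⟩, -, -, -, -, habcd⟩
    have hpow : ∀ x, x ∣ p ^ e → ∃ k, p ^ k = x := fun x hx =>
      let ⟨k, _, hk⟩ := (Nat.dvd_prime_pow hp).1 hx; ⟨k, hk.symm⟩
    obtain ⟨i, rfl⟩ := hpow a (habcd ▸ ⟨b * c * d, by ring⟩)
    obtain ⟨j, rfl⟩ := hpow b (habcd ▸ ⟨p ^ i * c * d, by ring⟩)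
    obtain ⟨k, rfl⟩ := hpow c (habcd ▸ ⟨p ^ i * p ^ j * d, by ring⟩)
    obtain ⟨l, rfl⟩ := hpow d (habcd ▸ ⟨p ^ i * p ^ j * p ^ k, by ring⟩)
    simp only [← pow_add] at habcd
    exact ⟨⟨(i, j, k, l), hinj habcd⟩, rfl⟩

section RectBand

variable {S T : Type*}

def IsRectangularBand (op : S → S → S) : Prop :=
  (∀ a b c, op (op a b) c = op a (op b c)) ∧ (∀ a, op a a = a) ∧ ∀ a b, op (op a b) a = a

namespace IsRectangularBand

variable {op : S → S → S} (h : IsRectangularBand op)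
include h

theorem op_op_left (x y z : S) : op (op x y) z = op x z := by
  obtain ⟨assoc, -, absorb⟩ := h
  have hz : op z (op x z) = z := by rw [← assoc, absorb]
  calc op (op x y) z = op x (op y (op z (op x z))) := by rw [hz, assoc]
    _ = op (op (op x (op y z)) x) z := by simp only [assoc]
    _ = op x z := by rw [absorb]

theorem op_op_right (x y z : S) : op x (op y z) = op x z := by
  rw [← h.1, h.op_op_left]

theorem flip : IsRectangularBand (flip op) :=
  ⟨fun a b c => (h.1 c b a).symm, h.2.1, fun a b => (h.op_op_right a b a).trans (h.2.1 a)⟩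

theorem of_semiconj₂ (e : S ≃ T) {op' : T → T → T} (he : Semiconj₂ e op op') :
    IsRectangularBand op' := by
  obtain ⟨assoc, idem, absorb⟩ := h
  refine ⟨?_, ?_, ?_⟩ <;> simp only [e.surjective.forall, ← he.eq]
  · exact fun a b c => congrArg e (assoc a b c)
  · exact fun a => congrArg e (idem a)
  · exact fun a b => congrArg e (absorb a b)

end IsRectangularBand

theorem isAntilattice_iff_isRectangularBand {j m : S → S → S} :
    IsAntilattice j m ↔ IsRectangularBand j ∧ IsRectangularBand m :=
  ⟨fun ⟨h₁, h₂, h₃, h₄, h₅, h₆⟩ => ⟨⟨h₁, h₂, h₃⟩, h₄, h₅, h₆⟩,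
    fun ⟨⟨h₁, h₂, h₃⟩, h₄, h₅, h₆⟩ => ⟨h₁, h₂, h₃, h₄, h₅, h₆⟩⟩

end RectBand

section Green

variable {S T : Type*} {j m : S → S → S}

theorem greenLjoin_flip : GreenLjoin (flip j) = GreenRjoin j :=
  funext₂ fun _ _ => propext and_comm

theorem greenRjoin_flip : GreenRjoin (flip j) = GreenLjoin j :=
  funext₂ fun _ _ => propext and_comm

theorem greenLmeet_flip : GreenLmeet (flip m) = GreenRmeet m :=
  funext₂ fun _ _ => propext and_comm

theorem greenRmeet_flip : GreenRmeet (flip m) = GreenLmeet m :=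
  funext₂ fun _ _ => propext and_comm

theorem eq_of_greenLmeet_of_greenRmeet {a b : S} (hL : GreenLmeet m a b)
    (hR : GreenRmeet m a b) : a = b :=
  hL.1.symm.trans hR.1

namespace IsCongruence

variable {θ : S → S → Prop} (h : IsCongruence j m θ)
include h

theorem flip_join : IsCongruence (flip j) m θ :=
  ⟨h.1, fun a b c d hab hcd => ⟨(h.2 c d a b hcd hab).1, (h.2 a b c d hab hcd).2⟩⟩

theorem flip_meet : IsCongruence j (flip m) θ :=
  ⟨h.1, fun a b c d hab hcd => ⟨(h.2 a b c d hab hcd).1, (h.2 c d a b hcd hab).2⟩⟩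

theorem of_semiconj₂ (e : S ≃ T) {j' m' : T → T → T} {θ' : T → T → Prop}
    (hj : Semiconj₂ e j j') (hm : Semiconj₂ e m m') (hθ : ∀ a b, θ' (e a) (e b) ↔ θ a b) :
    IsCongruence j' m' θ' := by
  obtain ⟨⟨refl, symm, trans⟩, compat⟩ := h
  refine ⟨⟨?_, ?_, ?_⟩, ?_⟩ <;> simp only [e.surjective.forall, ← hj.eq, ← hm.eq, hθ]
  · exact refl
  · exact fun _ _ => symm
  · exact fun _ _ _ => trans
  · exact compat

end IsCongruence

theorem greenLjoin_semiconj₂ {e : S ≃ T} {j' : T → T → T} (hj : Semiconj₂ e j j') (a b : S) :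
    GreenLjoin j' (e a) (e b) ↔ GreenLjoin j a b := by
  simp only [GreenLjoin, ← hj.eq, e.apply_eq_iff_eq]

theorem greenRjoin_semiconj₂ {e : S ≃ T} {j' : T → T → T} (hj : Semiconj₂ e j j') (a b : S) :
    GreenRjoin j' (e a) (e b) ↔ GreenRjoin j a b := by
  simp only [GreenRjoin, ← hj.eq, e.apply_eq_iff_eq]

end Green

namespace IsRegularAntilattice

variable {S T : Type*} {j m : S → S → S} (h : IsRegularAntilattice j m)
include h

theorem isRectangularBand_join : IsRectangularBand j :=
  (isAntilattice_iff_isRectangularBand.1 h.1).1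

theorem isRectangularBand_meet : IsRectangularBand m :=
  (isAntilattice_iff_isRectangularBand.1 h.1).2

theorem flip_join : IsRegularAntilattice (flip j) m := by
  obtain ⟨hA, hLj, hRj, hLm, hRm⟩ := h
  have hA' := isAntilattice_iff_isRectangularBand.1 hA
  refine ⟨isAntilattice_iff_isRectangularBand.2 ⟨hA'.1.flip, hA'.2⟩, ?_, ?_, hLm.flip_join,
    hRm.flip_join⟩
  · rw [greenLjoin_flip]; exact hRj.flip_join
  · rw [greenRjoin_flip]; exact hLj.flip_join

theorem flip_meet : IsRegularAntilattice j (flip m) := by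
  obtain ⟨hA, hLj, hRj, hLm, hRm⟩ := h
  have hA' := isAntilattice_iff_isRectangularBand.1 hA
  refine ⟨isAntilattice_iff_isRectangularBand.2 ⟨hA'.1, hA'.2.flip⟩, hLj.flip_meet,
    hRj.flip_meet, ?_, ?_⟩
  · rw [greenLmeet_flip]; exact hRm.flip_meet
  · rw [greenRmeet_flip]; exact hLm.flip_meet

theorem of_semiconj₂ (e : S ≃ T) {j' m' : T → T → T} (hj : Semiconj₂ e j j')
    (hm : Semiconj₂ e m m') : IsRegularAntilattice j' m' :=
  ⟨isAntilattice_iff_isRectangularBand.2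
      ⟨h.isRectangularBand_join.of_semiconj₂ e hj, h.isRectangularBand_meet.of_semiconj₂ e hm⟩,
    h.2.1.of_semiconj₂ e hj hm (greenLjoin_semiconj₂ hj),
    h.2.2.1.of_semiconj₂ e hj hm (greenRjoin_semiconj₂ hj),
    h.2.2.2.1.of_semiconj₂ e hj hm (greenLjoin_semiconj₂ hm),
    h.2.2.2.2.of_semiconj₂ e hj hm (greenRjoin_semiconj₂ hm)⟩

end IsRegularAntilattice

section Corner

theorem card_fixedPoints_of_retraction {X Y : Type*} {f : X → X} (π : X → Y) (ι : Y → X)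
    (hf : ∀ x, f x = ι (π x)) (hι : LeftInverse π ι) : Nat.card (fixedPoints f) = Nat.card Y :=
  Nat.card_congr
    { toFun x := π x
      invFun y := ⟨ι y, by rw [mem_fixedPoints, IsFixedPt, hf, hι]⟩
      left_inv x := Subtype.ext ((hf x).symm.trans x.2)
      right_inv := hι }

variable {S : Type*}

def corner (j m : S → S → S) (o x : S) : S := m (j x o) o

noncomputable def cornerCard (j m : S → S → S) (o : S) : ℕ :=
  Nat.card (fixedPoints (corner j m o))

noncomputable def cornerCards (j m : S → S → S) (o : S) : ℕ × ℕ × ℕ × ℕ :=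
  (cornerCard j m o, cornerCard j (flip m) o, cornerCard (flip j) m o,
    cornerCard (flip j) (flip m) o)

namespace IsRegularAntilattice

variable {j m : S → S → S} (h : IsRegularAntilattice j m)
include h

theorem corner_join (o x y : S) : corner j m o (j x y) = corner j m o x := by
  rw [corner, corner, h.isRectangularBand_join.op_op_left]

/-- Both sides are `L∧`-related to `o`, and they are `R∧`-related because `x` and `m x y` are;
but `L∧ ∩ R∧` is equality. -/
theorem corner_meet (o x y : S) : corner j m o (m x y) = corner j m o x := by
  have hm := h.isRectangularBand_meet
  obtain ⟨hLeqv, -⟩ := h.2.2.2.1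
  obtain ⟨hReqv, hRcompat⟩ := h.2.2.2.2
  have hR : GreenRmeet m x (m x y) := ⟨hm.op_op_right x x y, hm.2.2 x y⟩
  have hR' : GreenRmeet m (corner j m o x) (corner j m o (m x y)) :=
    (hRcompat _ _ _ _ (hRcompat _ _ _ _ hR (hReqv.refl o)).1 (hReqv.refl o)).2
  have hL : ∀ u, GreenLmeet m (m u o) o := fun u =>
    ⟨hm.op_op_left u o o, by rw [hm.op_op_right, hm.2.1]⟩
  exact (eq_of_greenLmeet_of_greenRmeet (hLeqv.trans (hL _) (hLeqv.symm (hL _))) hR').symm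

theorem corner_corner (o o' x : S) : corner j m o' (corner j m o x) = corner j m o' x :=
  (h.corner_meet o' _ _).trans (h.corner_join o' x o)

theorem corner_self (o : S) : corner j m o o = o := by
  rw [corner, h.isRectangularBand_join.2.1, h.isRectangularBand_meet.2.1]

theorem join_meet_corners (o x : S) :
    j (m (corner j m o x) (corner j (flip m) o x))
      (m (corner (flip j) m o x) (corner (flip j) (flip m) o x)) = x := by
  have hj := h.isRectangularBand_join
  have hm := h.isRectangularBand_meet
  simp only [corner, flip, hj.op_op_left, hj.op_op_right, hj.2.1, hm.op_op_left, hm.op_op_right,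
    hm.2.1]

theorem cornerCard_eq (o o' : S) : cornerCard j m o = cornerCard j m o' :=
  Nat.card_congr
    { toFun x := ⟨corner j m o' x, h.corner_corner o' o' x⟩
      invFun y := ⟨corner j m o y, h.corner_corner o o y⟩
      left_inv x := Subtype.ext ((h.corner_corner o' o x).trans x.2)
      right_inv y := Subtype.ext ((h.corner_corner o o' y).trans y.2) }

theorem cornerCards_eq (o o' : S) : cornerCards j m o = cornerCards j m o' := by
  rw [cornerCards, cornerCards, h.cornerCard_eq o o', h.flip_meet.cornerCard_eq o o',
    h.flip_join.cornerCard_eq o o', h.flip_join.flip_meet.cornerCard_eq o o']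

theorem cornerCard_pos [Finite S] (o : S) : 0 < cornerCard j m o :=
  have : Nonempty (fixedPoints (corner j m o)) := ⟨⟨o, h.corner_self o⟩⟩
  Nat.card_pos

end IsRegularAntilattice

end Corner

section Rect

variable {A B C D A' B' C' D' : Type*}

def rectJoin (x y : A × B × C × D) : A × B × C × D := (x.1, x.2.1, y.2.2.1, y.2.2.2)

def rectMeet (x y : A × B × C × D) : A × B × C × D := (x.1, y.2.1, x.2.2.1, y.2.2.2)

theorem isRegularAntilattice_rect :
    IsRegularAntilattice (rectJoin : A × B × C × D → _ → _) rectMeet := by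
  refine ⟨⟨fun _ _ _ => rfl, fun _ => rfl, fun _ _ => rfl, fun _ _ _ => rfl, fun _ => rfl,
    fun _ _ => rfl⟩, ?_, ?_, ?_, ?_⟩ <;>
  refine ⟨⟨fun _ => ⟨rfl, rfl⟩, ?_, ?_⟩, ?_⟩ <;>
  simp only [GreenLjoin, GreenRjoin, GreenLmeet, GreenRmeet, rectJoin, rectMeet, Prod.ext_iff] <;>
  grind

theorem semiconj₂_prodMap_rectJoin (f : A → A') (g : B → B') (k : C → C') (l : D → D') :
    Semiconj₂ (Prod.map f (Prod.map g (Prod.map k l))) rectJoin rectJoin :=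
  fun _ _ => rfl

theorem semiconj₂_prodMap_rectMeet (f : A → A') (g : B → B') (k : C → C') (l : D → D') :
    Semiconj₂ (Prod.map f (Prod.map g (Prod.map k l))) rectMeet rectMeet :=
  fun _ _ => rfl

theorem cornerCards_rect (o : A × B × C × D) :
    cornerCards rectJoin rectMeet o = (Nat.card A, Nat.card B, Nat.card C, Nat.card D) :=
  Prod.ext
    (card_fixedPoints_of_retraction (·.1) (fun a => (a, o.2)) (fun _ => rfl) fun _ => rfl)
    (Prod.ext
      (card_fixedPoints_of_retraction (·.2.1) (fun b => (o.1, b, o.2.2)) (fun _ => rfl)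
        fun _ => rfl)
      (Prod.ext
        (card_fixedPoints_of_retraction (·.2.2.1) (fun c => (o.1, o.2.1, c, o.2.2.2))
          (fun _ => rfl) fun _ => rfl)
        (card_fixedPoints_of_retraction (·.2.2.2) (fun d => (o.1, o.2.1, o.2.2.1, d))
          (fun _ => rfl) fun _ => rfl)))

end Rect

section Transport

variable {S T : Type*} {j m : S → S → S} {j' m' : T → T → T}

theorem cornerCard_semiconj₂ (e : S ≃ T) (hj : Semiconj₂ e j j') (hm : Semiconj₂ e m m')
    (o : S) : cornerCard j' m' (e o) = cornerCard j m o := by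
  have he : ∀ x, corner j' m' (e o) (e x) = e (corner j m o x) := fun x => by
    simp only [corner, hj.eq, hm.eq]
  refine (Nat.card_congr (e.subtypeEquiv fun x => ?_)).symm
  simp only [mem_fixedPoints, IsFixedPt, he, e.apply_eq_iff_eq]

theorem cornerCards_semiconj₂ (e : S ≃ T) (hj : Semiconj₂ e j j') (hm : Semiconj₂ e m m')
    (o : S) : cornerCards j' m' (e o) = cornerCards j m o := by
  have hj' : Semiconj₂ e (flip j) (flip j') := fun x y => hj y x
  have hm' : Semiconj₂ e (flip m) (flip m') := fun x y => hm y x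
  rw [cornerCards, cornerCards, cornerCard_semiconj₂ e hj hm, cornerCard_semiconj₂ e hj hm',
    cornerCard_semiconj₂ e hj' hm, cornerCard_semiconj₂ e hj' hm']

end Transport

namespace IsRegularAntilattice

variable {S : Type*} {j m : S → S → S} (h : IsRegularAntilattice j m)
include h

def equivCorners (o : S) :
    S ≃ fixedPoints (corner j m o) × fixedPoints (corner j (flip m) o) ×
      fixedPoints (corner (flip j) m o) × fixedPoints (corner (flip j) (flip m) o) where
  toFun x := (⟨_, h.corner_corner o o x⟩, ⟨_, h.flip_meet.corner_corner o o x⟩,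
    ⟨_, h.flip_join.corner_corner o o x⟩, ⟨_, h.flip_join.flip_meet.corner_corner o o x⟩)
  invFun q := j (m q.1 q.2.1) (m q.2.2.1 q.2.2.2)
  left_inv := h.join_meet_corners o
  right_inv := fun ⟨⟨a, ha⟩, ⟨b, hb⟩, ⟨c, hc⟩, ⟨d, hd⟩⟩ =>
    Prod.ext (Subtype.ext ((h.corner_join o _ _).trans ((h.corner_meet o a b).trans ha)))
      (Prod.ext
        (Subtype.ext ((h.flip_meet.corner_join o _ _).trans
          ((h.flip_meet.corner_meet o b a).trans hb)))
        (Prod.ext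
          (Subtype.ext ((h.flip_join.corner_join o (m c d) _).trans
            ((h.flip_join.corner_meet o c d).trans hc)))
          (Subtype.ext ((h.flip_join.flip_meet.corner_join o (m c d) _).trans
            ((h.flip_join.flip_meet.corner_meet o d c).trans hd)))))

theorem semiconj₂_equivCorners_join (o : S) : Semiconj₂ (h.equivCorners o) j rectJoin :=
  fun x y => Prod.ext (Subtype.ext (h.corner_join o x y))
    (Prod.ext (Subtype.ext (h.flip_meet.corner_join o x y))
      (Prod.ext (Subtype.ext (h.flip_join.corner_join o y x))
        (Subtype.ext (h.flip_join.flip_meet.corner_join o y x))))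

theorem semiconj₂_equivCorners_meet (o : S) : Semiconj₂ (h.equivCorners o) m rectMeet :=
  fun x y => Prod.ext (Subtype.ext (h.corner_meet o x y))
    (Prod.ext (Subtype.ext (h.flip_meet.corner_meet o y x))
      (Prod.ext (Subtype.ext (h.flip_join.corner_meet o x y))
        (Subtype.ext (h.flip_join.flip_meet.corner_meet o y x))))

theorem prod_cornerCards (o : S) :
    (cornerCards j m o).1 * (cornerCards j m o).2.1 * (cornerCards j m o).2.2.1 *
      (cornerCards j m o).2.2.2 = Nat.card S := by
  rw [Nat.card_congr (h.equivCorners o)]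
  simp only [Nat.card_prod, cornerCards, cornerCard, mul_assoc]

end IsRegularAntilattice

abbrev RegularAntilatticeOn (n : ℕ) : Type :=
  {jm : (Fin n → Fin n → Fin n) × (Fin n → Fin n → Fin n) // IsRegularAntilattice jm.1 jm.2}

section Model

variable {n : ℕ}

noncomputable def rectEquivFin (q : OrderedFactorizations n) :
    Fin q.1.1 × Fin q.1.2.1 × Fin q.1.2.2.1 × Fin q.1.2.2.2 ≃ Fin n :=
  Fintype.equivOfCardEq (by simp [← q.2.2.2.2.2, mul_assoc])

noncomputable def rectModel (q : OrderedFactorizations n) : RegularAntilatticeOn n :=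
  let e := rectEquivFin q
  ⟨(e.arrowCongr e.conj rectJoin, e.arrowCongr e.conj rectMeet),
    isRegularAntilattice_rect.of_semiconj₂ e (e.semiconj₂_conj _) (e.semiconj₂_conj _)⟩

theorem cornerCards_rectModel (q : OrderedFactorizations n) (o : Fin n) :
    cornerCards (rectModel q).1.1 (rectModel q).1.2 o = q.1 := by
  let e := rectEquivFin q
  have := cornerCards_semiconj₂ e (e.semiconj₂_conj rectJoin) (e.semiconj₂_conj rectMeet)
    (e.symm o)
  rw [e.apply_symm_apply, cornerCards_rect] at this
  simp only [Nat.card_fin] at this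
  exact this

namespace IsRegularAntilattice

variable {j m : Fin n → Fin n → Fin n} (h : IsRegularAntilattice j m)
include h

noncomputable def cornerFactorization (o : Fin n) : OrderedFactorizations n :=
  ⟨cornerCards j m o, h.cornerCard_pos o, h.flip_meet.cornerCard_pos o,
    h.flip_join.cornerCard_pos o, h.flip_join.flip_meet.cornerCard_pos o,
    (h.prod_cornerCards o).trans (Nat.card_fin n)⟩

theorem antilatticeIso_rectModel (o : Fin n) :
    AntilatticeIso (j, m) (rectModel (h.cornerFactorization o)).1 := by
  let e := rectEquivFin (h.cornerFactorization o)
  refine ⟨(h.equivCorners o).trans (((Finite.equivFin _).prodCongr ((Finite.equivFin _).prodCongr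
    ((Finite.equivFin _).prodCongr (Finite.equivFin _)))).trans e), ?_, ?_⟩
  · exact (e.semiconj₂_conj _).comp
      ((semiconj₂_prodMap_rectJoin _ _ _ _).comp (h.semiconj₂_equivCorners_join o))
  · exact (e.semiconj₂_conj _).comp
      ((semiconj₂_prodMap_rectMeet _ _ _ _).comp (h.semiconj₂_equivCorners_meet o))

end IsRegularAntilattice

end Model

theorem AntilatticeIso.cornerCards_eq {F : Type*} {p q : (F → F → F) × (F → F → F)}
    (hpq : AntilatticeIso p q) (hq : IsRegularAntilattice q.1 q.2) (o : F) :
    cornerCards q.1 q.2 o = cornerCards p.1 p.2 o := by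
  obtain ⟨f, hj, hm⟩ := hpq
  rw [hq.cornerCards_eq o (f o)]
  exact cornerCards_semiconj₂ f hj hm o

theorem card_quot_antilatticeIso {n : ℕ} (hn : 0 < n) :
    Nat.card (Quot fun s t : RegularAntilatticeOn n => AntilatticeIso s.1 t.1) =
      Nat.card (OrderedFactorizations n) := by
  let o : Fin n := ⟨0, hn⟩
  let invariant : (Quot fun s t : RegularAntilatticeOn n => AntilatticeIso s.1 t.1) →
      ℕ × ℕ × ℕ × ℕ :=
    Quot.lift (fun s => cornerCards s.1.1 s.1.2 o) fun s t hst => (hst.cornerCards_eq t.2 o).symm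
  refine (Nat.card_eq_of_bijective (fun q => Quot.mk _ (rectModel q))
    ⟨fun q q' hqq => Subtype.ext ?_, Quot.ind fun s => ?_⟩).symm
  · simpa only [invariant, Quot.lift_mk, cornerCards_rectModel] using congrArg invariant hqq
  · exact ⟨s.2.cornerFactorization o, Eq.symm (Quot.sound (s.2.antilatticeIso_rectModel o))⟩

/-- For a prime `p` and `e ≥ 0`, the number of ordered quadruples of positive
integers with product `p^e` is `C(e+3, 3)`; consequently the number of
isomorphism classes of regular antilattices of order `p^e` is `C(e+3, 3)`. -/
theorem count_regular_antilattices_prime_power (p e : ℕ) (hp : p.Prime) :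
    Nat.card {q : ℕ × ℕ × ℕ × ℕ //
        0 < q.1 ∧ 0 < q.2.1 ∧ 0 < q.2.2.1 ∧ 0 < q.2.2.2 ∧
        q.1 * q.2.1 * q.2.2.1 * q.2.2.2 = p ^ e} = (e + 3).choose 3 ∧
    Nat.card (Quot (fun a b :
        {jm : (Fin (p ^ e) → Fin (p ^ e) → Fin (p ^ e)) ×
              (Fin (p ^ e) → Fin (p ^ e) → Fin (p ^ e)) //
          IsRegularAntilattice jm.1 jm.2} => AntilatticeIso a.1 b.1)) =
      (e + 3).choose 3 :=
  ⟨card_orderedFactorizations_prime_pow hp e,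
    (card_quot_antilatticeIso (pow_pos hp.pos e)).trans (card_orderedFactorizations_prime_pow hp e)⟩
end
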